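/- Let A be a residuated lattice. The following are equivalent: (1) any two distinct minimal prime filters P, Q of A are comaximal, i.e. P ∨ Q = A in the lattice of filters; (2) A is normal; (3) for every prime filter P, D(P) = {a ∈ A | x ∨ a = 1 for some x ∉ P} is a prime filter; (4) for any x, y ∈ A, x ∨ y = 1 implies x^⊥ ∨ y^⊥ = A (join in the lattice of filters); (5) for any x, y ∈ A, x ∨ y = 1 implies there exist u ∈ x^⊥ and v ∈ y^⊥ with u ⊙ v = 0; (6) for any x, y ∈ A, (x ∨ y)^⊥ = x^⊥ ∨ y^⊥; (7) for any x, y ∈ A, (x ∨ y)^⊥ = A implies x^⊥ ∨ y^⊥ = A. -/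

import Mathlib

class ResiduatedLattice (α : Type*) extends Lattice α, CommMonoid α, BoundedOrder α where
  rimp : α → α → α
  one_eq_top : (1 : α) = ⊤
  adjunction : ∀ x y z : α, x * y ≤ z ↔ x ≤ rimp y z

variable {α : Type*} [ResiduatedLattice α]

/-- A filter of a residuated lattice: nonempty, closed under `⊙` and upward closed. -/
def IsFilter (F : Set α) : Prop :=
  F.Nonempty ∧ (∀ x ∈ F, ∀ y ∈ F, x * y ∈ F) ∧ ∀ x ∈ F, ∀ y : α, x ≤ y → y ∈ F

/-- A prime filter: a proper filter such that `x ⊔ y ∈ P` implies `x ∈ P` or `y ∈ P`. -/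
def IsPrimeFilter (P : Set α) : Prop :=
  IsFilter P ∧ P ≠ Set.univ ∧ ∀ x y : α, x ⊔ y ∈ P → x ∈ P ∨ y ∈ P

/-- A `∨`-closed subset: nonempty and closed under join. -/
def IsJoinClosed (C : Set α) : Prop :=
  C.Nonempty ∧ ∀ x ∈ C, ∀ y ∈ C, x ⊔ y ∈ C

/-- The filter generated by a set. -/
def filterGen (X : Set α) : Set α := ⋂₀ {G : Set α | IsFilter G ∧ X ⊆ G}

/-- An `X`-minimal prime filter: prime, contains `X`, minimal among primes containing `X`. -/
def IsMinPrimeOver (X P : Set α) : Prop :=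
  IsPrimeFilter P ∧ X ⊆ P ∧ ∀ Q : Set α, IsPrimeFilter Q → X ⊆ Q → Q ⊆ P → Q = P

/-- `ω_F(X) = {a | x ∨ a ∈ F for some x ∈ X}`. -/
def omegaF (F X : Set α) : Set α := {a : α | ∃ x ∈ X, x ⊔ a ∈ F}

/-- The coannihilator `(F : x) = {a | x ∨ a ∈ F}`. -/
def coann (F : Set α) (x : α) : Set α := {a : α | x ⊔ a ∈ F}

/-- `D_F(H) = {a | x ∨ a ∈ F for some x ∉ H}`, the set of `F`-divisors of `H`. -/
def divisorsF (F H : Set α) : Set α := {a : α | ∃ x ∉ H, x ⊔ a ∈ F}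

/-- A lattice ideal: nonempty, closed under join and downward closed. -/
def IsLatticeIdeal (I : Set α) : Prop :=
  I.Nonempty ∧ (∀ x ∈ I, ∀ y ∈ I, x ⊔ y ∈ I) ∧ ∀ x y : α, x ≤ y → y ∈ I → x ∈ I

/-- The lattice ideal generated by a set. -/
def idealGen (X : Set α) : Set α := ⋂₀ {I : Set α | IsLatticeIdeal I ∧ X ⊆ I}

/-- An `ω_F`-filter: a filter of the form `ω_F(I)` for some lattice ideal `I`. -/
def IsOmegaFilter (F H : Set α) : Prop :=
  IsFilter H ∧ ∃ I : Set α, IsLatticeIdeal I ∧ H = omegaF F I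

/-- A minimal prime filter: a prime filter minimal among all prime filters. -/
def IsMinPrime (P : Set α) : Prop :=
  IsPrimeFilter P ∧ ∀ Q : Set α, IsPrimeFilter Q → Q ⊆ P → Q = P

/-- The coannulet `x^⊥ = {a | x ∨ a = 1}`. -/
def coannulet (x : α) : Set α := {a : α | x ⊔ a = ⊤}

/-- `D(P) = {a | x ∨ a = 1 for some x ∉ P}`, the set of unit divisors of `P`. -/
def unitDivisors (P : Set α) : Set α := {a : α | ∃ x ∉ P, x ⊔ a = ⊤}

/-- `A` is normal: every prime filter contains exactly one minimal prime filter. -/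
def IsNormalRL (α : Type*) [ResiduatedLattice α] : Prop :=
  ∀ P : Set α, IsPrimeFilter P → ∃! m : Set α, IsMinPrime m ∧ m ⊆ P

/-!
The engine is the prime filter theorem: a filter disjoint from a `∨`-closed set `C` extends
to a prime filter disjoint from `C`, since a maximal such filter is prime by
`(x ∨ y)^(mn) ≤ x^m ∨ y^n`. Hence every prime filter contains a minimal one, and a prime `R`
containing `z^⊥` contains a prime missing `z`. Under normality this makes distinct minimal
primes comaximal, and makes `x^⊥ ∨ y^⊥ = A` whenever `x ∨ y = 1`, which unwinds to
`u ⊙ v = 0` with `u ∈ x^⊥`, `v ∈ y^⊥`. That splitting gives `(x ∨ y)^⊥ = x^⊥ ∨ y^⊥` and the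
primality of `D(P)`; conversely `D(P)` lies in every prime below `P`, so when it is prime it
is the unique minimal prime below `P`.
-/

namespace ResiduatedLattice

theorem gc (y : α) : GaloisConnection (· * y) (rimp y) := fun x z => adjunction x y z

instance : IsOrderedMonoid α where
  mul_le_mul_left _ _ h c := (gc c).monotone_l h

theorem le_one (a : α) : a ≤ 1 := one_eq_top (α := α) ▸ le_top

theorem mul_le_left (a b : α) : a * b ≤ a := mul_le_of_le_one_right' (le_one b)

theorem mul_le_right (a b : α) : a * b ≤ b := mul_le_of_le_one_left' (le_one a)

protected theorem sup_mul (a b c : α) : (a ⊔ b) * c = a * c ⊔ b * c := (gc c).l_sup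

protected theorem mul_sup (a b c : α) : a * (b ⊔ c) = a * b ⊔ a * c := by
  simp only [mul_comm a, ResiduatedLattice.sup_mul]

theorem sup_mul_sup_le (a b c : α) : (a ⊔ b) * (a ⊔ c) ≤ a ⊔ b * c := by
  rw [ResiduatedLattice.sup_mul, ResiduatedLattice.mul_sup b]
  exact sup_le ((mul_le_left a _).trans le_sup_left)
    (sup_le ((mul_le_right b a).trans le_sup_left) le_sup_right)

theorem sup_mul_eq_top {x a b : α} (ha : x ⊔ a = ⊤) (hb : x ⊔ b = ⊤) : x ⊔ a * b = ⊤ := by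
  refine top_le_iff.mp ?_
  simpa [ha, hb, ← one_eq_top] using sup_mul_sup_le x a b

theorem sup_pow_le (a b : α) : ∀ n : ℕ, (a ⊔ b) ^ n ≤ a ⊔ b ^ n
  | 0 => by simp
  | n + 1 =>
    calc (a ⊔ b) ^ (n + 1) = (a ⊔ b) ^ n * (a ⊔ b) := pow_succ _ _
      _ ≤ (a ⊔ b ^ n) * (a ⊔ b) := mul_le_mul_left (sup_pow_le a b n) _
      _ ≤ a ⊔ b ^ n * b := sup_mul_sup_le a _ _
      _ = a ⊔ b ^ (n + 1) := by rw [pow_succ]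

theorem sup_pow_mul_le (a b : α) (m n : ℕ) : (a ⊔ b) ^ (m * n) ≤ a ^ m ⊔ b ^ n :=
  calc (a ⊔ b) ^ (m * n) = ((a ⊔ b) ^ n) ^ m := by rw [mul_comm, pow_mul]
    _ ≤ (b ^ n ⊔ a) ^ m := pow_le_pow_left' ((sup_pow_le a b n).trans_eq (sup_comm _ _)) m
    _ ≤ b ^ n ⊔ a ^ m := sup_pow_le _ _ m
    _ = a ^ m ⊔ b ^ n := sup_comm _ _

end ResiduatedLattice

open ResiduatedLattice Set

namespace IsFilter

variable {F G : Set α} {a b : α}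

theorem mul_mem (hF : IsFilter F) (ha : a ∈ F) (hb : b ∈ F) : a * b ∈ F := hF.2.1 a ha b hb

theorem mem_of_le (hF : IsFilter F) (ha : a ∈ F) (hab : a ≤ b) : b ∈ F := hF.2.2 a ha b hab

theorem top_mem (hF : IsFilter F) : ⊤ ∈ F :=
  hF.1.elim fun _ ha => hF.mem_of_le ha le_top

theorem one_mem (hF : IsFilter F) : (1 : α) ∈ F := one_eq_top (α := α) ▸ hF.top_mem

theorem pow_mem (hF : IsFilter F) (ha : a ∈ F) : ∀ n : ℕ, a ^ n ∈ F
  | 0 => by simpa using hF.one_mem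
  | n + 1 => pow_succ a n ▸ hF.mul_mem (hF.pow_mem ha n) ha

theorem eq_univ_iff_bot_mem (hF : IsFilter F) : F = univ ↔ ⊥ ∈ F :=
  ⟨fun h => h ▸ mem_univ _, fun h => eq_univ_of_forall fun _ => hF.mem_of_le h bot_le⟩

theorem sInter {S : Set (Set α)} (hS : ∀ G ∈ S, IsFilter G) : IsFilter (⋂₀ S) :=
  ⟨⟨⊤, fun G hG => (hS G hG).top_mem⟩,
    fun _ ha _ hb G hG => (hS G hG).mul_mem (ha G hG) (hb G hG),
    fun _ ha _ hab G hG => (hS G hG).mem_of_le (ha G hG) hab⟩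

theorem sUnion_of_isChain {S : Set (Set α)} (hS : ∀ G ∈ S, IsFilter G)
    (hchain : IsChain (· ⊆ ·) S) (hne : S.Nonempty) : IsFilter (⋃₀ S) := by
  obtain ⟨G₀, hG₀⟩ := hne
  refine ⟨⟨⊤, G₀, hG₀, (hS G₀ hG₀).top_mem⟩, ?_, ?_⟩
  · rintro a ⟨G₁, hG₁, ha⟩ b ⟨G₂, hG₂, hb⟩
    rcases hchain.total hG₁ hG₂ with h | h
    · exact ⟨G₂, hG₂, (hS G₂ hG₂).mul_mem (h ha) hb⟩
    · exact ⟨G₁, hG₁, (hS G₁ hG₁).mul_mem ha (h hb)⟩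
  · rintro a ⟨G₁, hG₁, ha⟩ b hab
    exact ⟨G₁, hG₁, (hS G₁ hG₁).mem_of_le ha hab⟩

end IsFilter

theorem subset_filterGen (X : Set α) : X ⊆ filterGen X := fun _ ha _ hG => hG.2 ha

theorem filterGen_subset {X F : Set α} (hF : IsFilter F) (hXF : X ⊆ F) : filterGen X ⊆ F :=
  sInter_subset_of_mem ⟨hF, hXF⟩

theorem isFilter_filterGen (X : Set α) : IsFilter (filterGen X) :=
  IsFilter.sInter fun _ hG => hG.1

/-- For filters `F` and `G` this is the join `F ∨ G` in the lattice of filters. -/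
def filterSup (F G : Set α) : Set α := {a | ∃ u ∈ F, ∃ v ∈ G, u * v ≤ a}

section FilterSup

variable {F G : Set α}

theorem IsFilter.filterSup (hF : IsFilter F) (hG : IsFilter G) : IsFilter (filterSup F G) := by
  refine ⟨⟨⊤, ⊤, hF.top_mem, ⊤, hG.top_mem, le_top⟩, ?_, ?_⟩
  · rintro a ⟨u, hu, v, hv, hle⟩ b ⟨u', hu', v', hv', hle'⟩
    refine ⟨u * u', hF.mul_mem hu hu', v * v', hG.mul_mem hv hv', ?_⟩
    rw [mul_mul_mul_comm]
    exact mul_le_mul' hle hle'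
  · rintro a ⟨u, hu, v, hv, hle⟩ b hab
    exact ⟨u, hu, v, hv, hle.trans hab⟩

theorem subset_filterSup_left (hG : IsFilter G) : F ⊆ filterSup F G :=
  fun u hu => ⟨u, hu, 1, hG.one_mem, (mul_one u).le⟩

theorem subset_filterSup_right (hF : IsFilter F) : G ⊆ filterSup F G :=
  fun v hv => ⟨1, hF.one_mem, v, hv, (one_mul v).le⟩

theorem filterGen_union (hF : IsFilter F) (hG : IsFilter G) :
    filterGen (F ∪ G) = filterSup F G := by
  refine (filterGen_subset (hF.filterSup hG)
    (union_subset (subset_filterSup_left hG) (subset_filterSup_right hF))).antisymm ?_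
  rintro a ⟨u, hu, v, hv, hle⟩
  have hgen := isFilter_filterGen (F ∪ G)
  exact hgen.mem_of_le (hgen.mul_mem (subset_filterGen _ (Or.inl hu))
    (subset_filterGen _ (Or.inr hv))) hle

end FilterSup

def powerFilter (x : α) : Set α := {a | ∃ n : ℕ, x ^ n ≤ a}

theorem isFilter_powerFilter (x : α) : IsFilter (powerFilter x) := by
  refine ⟨⟨⊤, 0, le_top⟩, ?_, ?_⟩
  · rintro a ⟨n, hn⟩ b ⟨m, hm⟩
    exact ⟨n + m, pow_add x n m ▸ mul_le_mul' hn hm⟩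
  · rintro a ⟨n, hn⟩ b hab
    exact ⟨n, hn.trans hab⟩

theorem mem_powerFilter_self (x : α) : x ∈ powerFilter x := ⟨1, (pow_one x).le⟩

theorem mem_coannulet {x a : α} : a ∈ coannulet x ↔ x ⊔ a = ⊤ := Iff.rfl

theorem isFilter_coannulet (x : α) : IsFilter (coannulet x) :=
  ⟨⟨⊤, sup_top_eq x⟩, fun _ ha _ hb => sup_mul_eq_top ha hb,
    fun _ ha _ hab => top_le_iff.mp (ha ▸ sup_le_sup_left hab x)⟩

theorem coannulet_mono {x y : α} (h : x ≤ y) : coannulet x ⊆ coannulet y :=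
  fun a ha => top_le_iff.mp (ha ▸ sup_le_sup_right h a)

theorem coannulet_top : coannulet (⊤ : α) = univ :=
  eq_univ_of_forall fun a => top_sup_eq a

section Separation

variable {F C M : Set α}

theorem exists_mul_pow_le_of_maximal
    (hM : Maximal (fun G => IsFilter G ∧ F ⊆ G ∧ Disjoint G C) M) {x : α} (hx : x ∉ M) :
    ∃ c ∈ C, ∃ q ∈ M, ∃ n : ℕ, q * x ^ n ≤ c := by
  by_contra! h
  obtain ⟨hMfil, hFM, -⟩ := hM.prop
  have hMG : M ⊆ filterSup M (powerFilter x) := subset_filterSup_left (isFilter_powerFilter x)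
  have hGC : Disjoint (filterSup M (powerFilter x)) C := by
    rw [disjoint_left]
    rintro c ⟨q, hq, v, ⟨n, hn⟩, hle⟩ hc
    exact h c hc q hq n ((mul_le_mul_right hn q).trans hle)
  have hG := hM.eq_of_subset ⟨hMfil.filterSup (isFilter_powerFilter x), hFM.trans hMG, hGC⟩ hMG
  exact hx (hG ▸ subset_filterSup_right hMfil (mem_powerFilter_self x))

theorem isPrimeFilter_of_maximal (hC : IsJoinClosed C)
    (hM : Maximal (fun G => IsFilter G ∧ F ⊆ G ∧ Disjoint G C) M) : IsPrimeFilter M := by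
  obtain ⟨hMfil, -, hMC⟩ := hM.prop
  refine ⟨hMfil, fun h => hC.1.elim fun c hc => disjoint_left.mp hMC (h ▸ mem_univ c) hc, ?_⟩
  intro x y hxy
  by_contra! hxyM
  obtain ⟨c₁, hc₁, q₁, hq₁, n, h₁⟩ := exists_mul_pow_le_of_maximal hM hxyM.1
  obtain ⟨c₂, hc₂, q₂, hq₂, m, h₂⟩ := exists_mul_pow_le_of_maximal hM hxyM.2
  have hle : q₁ * q₂ * (x ⊔ y) ^ (n * m) ≤ c₁ ⊔ c₂ :=
    calc q₁ * q₂ * (x ⊔ y) ^ (n * m) ≤ q₁ * q₂ * (x ^ n ⊔ y ^ m) :=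
          mul_le_mul_right (sup_pow_mul_le x y n m) _
      _ = q₁ * q₂ * x ^ n ⊔ q₁ * q₂ * y ^ m := ResiduatedLattice.mul_sup _ _ _
      _ ≤ c₁ ⊔ c₂ := sup_le_sup
          ((mul_le_mul_left (mul_le_left q₁ q₂) _).trans h₁)
          ((mul_le_mul_left (mul_le_right q₁ q₂) _).trans h₂)
  have hmem := hMfil.mem_of_le
    (hMfil.mul_mem (hMfil.mul_mem hq₁ hq₂) (hMfil.pow_mem hxy _)) hle
  exact disjoint_left.mp hMC hmem (hC.2 c₁ hc₁ c₂ hc₂)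

theorem exists_isPrimeFilter_disjoint (hF : IsFilter F) (hC : IsJoinClosed C)
    (hFC : Disjoint F C) : ∃ P, IsPrimeFilter P ∧ F ⊆ P ∧ Disjoint P C := by
  obtain ⟨M, hFM, hM⟩ := zorn_subset_nonempty {G | IsFilter G ∧ F ⊆ G ∧ Disjoint G C}
    (fun S hS hchain hne => ⟨⋃₀ S,
      ⟨IsFilter.sUnion_of_isChain (fun G hG => (hS hG).1) hchain hne,
        hne.elim fun G hG => (hS hG).2.1.trans (subset_sUnion_of_mem hG),
        disjoint_sUnion_left.mpr fun G hG => (hS hG).2.2⟩,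
      fun _ => subset_sUnion_of_mem⟩) F ⟨hF, subset_rfl, hFC⟩
  exact ⟨M, isPrimeFilter_of_maximal hC hM, hFM, hM.prop.2.2⟩

theorem exists_isPrimeFilter_superset (hF : IsFilter F) (hne : F ≠ univ) :
    ∃ P, IsPrimeFilter P ∧ F ⊆ P := by
  obtain ⟨P, hP, hFP, -⟩ := exists_isPrimeFilter_disjoint (C := {⊥}) hF
    ⟨singleton_nonempty ⊥, by simp⟩
    (disjoint_singleton_right.mpr (hne ∘ hF.eq_univ_iff_bot_mem.mpr))
  exact ⟨P, hP, hFP⟩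

end Separation

namespace IsPrimeFilter

variable {P Q R : Set α}

theorem bot_notMem (hP : IsPrimeFilter P) : ⊥ ∉ P := hP.2.1 ∘ hP.1.eq_univ_iff_bot_mem.mpr

theorem mem_of_sup_eq_top (hP : IsPrimeFilter P) {x a : α} (hx : x ∉ P) (hxa : x ⊔ a = ⊤) :
    a ∈ P :=
  (hP.2.2 x a (hxa ▸ hP.1.top_mem)).resolve_left hx

theorem sInter_of_isChain {S : Set (Set α)} (hS : ∀ Q ∈ S, IsPrimeFilter Q)
    (hchain : IsChain (· ⊆ ·) S) (hne : S.Nonempty) : IsPrimeFilter (⋂₀ S) := by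
  obtain ⟨Q₀, hQ₀⟩ := hne
  refine ⟨IsFilter.sInter fun Q hQ => (hS Q hQ).1,
    fun h => (hS Q₀ hQ₀).2.1 (eq_univ_of_univ_subset (h ▸ sInter_subset_of_mem hQ₀)), ?_⟩
  intro x y hxy
  by_contra! hnot
  simp only [mem_sInter, not_forall] at hnot
  obtain ⟨⟨Q₁, hQ₁, hx⟩, ⟨Q₂, hQ₂, hy⟩⟩ := hnot
  rcases hchain.total hQ₁ hQ₂ with h | h
  · exact ((hS Q₁ hQ₁).2.2 x y (hxy Q₁ hQ₁)).elim hx fun hy' => hy (h hy')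
  · exact ((hS Q₂ hQ₂).2.2 x y (hxy Q₂ hQ₂)).elim (fun hx' => hx (h hx')) hy

theorem exists_isMinPrime_subset (hP : IsPrimeFilter P) : ∃ m, IsMinPrime m ∧ m ⊆ P := by
  obtain ⟨m, hmP, hm⟩ := zorn_superset_nonempty {Q | IsPrimeFilter Q ∧ Q ⊆ P}
    (fun S hS hchain hne => ⟨⋂₀ S,
      ⟨sInter_of_isChain (fun Q hQ => (hS hQ).1) hchain hne,
        hne.elim fun Q hQ => (sInter_subset_of_mem hQ).trans (hS hQ).2⟩,
      fun _ => sInter_subset_of_mem⟩) P ⟨hP, subset_rfl⟩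
  exact ⟨m, ⟨hm.prop.1, fun Q hQ hQm => hm.eq_of_subset ⟨hQ, hQm.trans hmP⟩ hQm⟩, hmP⟩

/-- Separate the filter `z^⊥` from the `∨`-closed set `{z ∨ r | r ∉ R}`, which contains
`z = z ∨ ⊥`. -/
theorem exists_subset_notMem (hR : IsPrimeFilter R) {z : α} (hz : coannulet z ⊆ R) :
    ∃ Q, IsPrimeFilter Q ∧ Q ⊆ R ∧ z ∉ Q := by
  have hC : IsJoinClosed ((z ⊔ ·) '' Rᶜ) := by
    refine ⟨⟨z ⊔ ⊥, ⊥, hR.bot_notMem, rfl⟩, ?_⟩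
    rintro _ ⟨r, hr, rfl⟩ _ ⟨s, hs, rfl⟩
    refine ⟨r ⊔ s, fun hrs => (hR.2.2 r s hrs).elim hr hs, ?_⟩
    rw [sup_sup_sup_comm, sup_idem]
  have hdisj : Disjoint (coannulet z) ((z ⊔ ·) '' Rᶜ) := by
    rw [disjoint_left]
    rintro _ hzr ⟨r, hr, rfl⟩
    rw [mem_coannulet, ← sup_assoc, sup_idem] at hzr
    exact hr (hz hzr)
  obtain ⟨Q, hQ, -, hQC⟩ := exists_isPrimeFilter_disjoint (isFilter_coannulet z) hC hdisj
  refine ⟨Q, hQ, fun q hq => ?_, fun hzQ => ?_⟩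
  · by_contra hqR
    exact disjoint_left.mp hQC (hQ.1.mem_of_le hq le_sup_right) ⟨q, hqR, rfl⟩
  · exact disjoint_left.mp hQC hzQ ⟨⊥, hR.bot_notMem, sup_bot_eq z⟩

theorem exists_isMinPrime_subset_notMem (hR : IsPrimeFilter R) {z : α}
    (hz : coannulet z ⊆ R) : ∃ m, IsMinPrime m ∧ m ⊆ R ∧ z ∉ m := by
  obtain ⟨Q, hQ, hQR, hzQ⟩ := hR.exists_subset_notMem hz
  obtain ⟨m, hm, hmQ⟩ := hQ.exists_isMinPrime_subset
  exact ⟨m, hm, hmQ.trans hQR, fun hzm => hzQ (hmQ hzm)⟩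

theorem unitDivisors_subset (hQ : IsPrimeFilter Q) (hQP : Q ⊆ P) : unitDivisors P ⊆ Q :=
  fun _ ⟨_, hx, hxa⟩ => hQ.mem_of_sup_eq_top (fun h => hx (hQP h)) hxa

theorem isFilter_unitDivisors (hP : IsPrimeFilter P) : IsFilter (unitDivisors P) := by
  obtain ⟨x₀, hx₀⟩ := (ne_univ_iff_exists_notMem P).mp hP.2.1
  refine ⟨⟨⊤, x₀, hx₀, sup_top_eq x₀⟩, ?_, ?_⟩
  · rintro a ⟨x, hx, hxa⟩ b ⟨y, hy, hyb⟩
    refine ⟨x ⊔ y, fun h => (hP.2.2 x y h).elim hx hy, sup_mul_eq_top ?_ ?_⟩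
    · rw [sup_right_comm, hxa, top_sup_eq]
    · rw [sup_assoc, hyb, sup_top_eq]
  · rintro a ⟨x, hx, hxa⟩ b hab
    exact ⟨x, hx, top_le_iff.mp (hxa ▸ sup_le_sup_left hab x)⟩

theorem unitDivisors_ne_univ (hP : IsPrimeFilter P) : unitDivisors P ≠ univ := by
  intro h
  obtain ⟨x, hx, hxbot⟩ : ⊥ ∈ unitDivisors P := h ▸ mem_univ _
  exact hx (sup_bot_eq x ▸ hxbot ▸ hP.1.top_mem)

end IsPrimeFilter

theorem isNormalRL_of_comaximal
    (h : ∀ P Q : Set α, IsMinPrime P → IsMinPrime Q → P ≠ Q → filterGen (P ∪ Q) = univ) :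
    IsNormalRL α := by
  intro P hP
  obtain ⟨m, hm, hmP⟩ := hP.exists_isMinPrime_subset
  refine ⟨m, ⟨hm, hmP⟩, fun m' ⟨hm', hm'P⟩ => ?_⟩
  by_contra hne
  refine hP.2.1 (eq_univ_of_univ_subset ?_)
  exact h m' m hm' hm hne ▸ filterGen_subset hP.1 (union_subset hm'P hmP)

theorem IsNormalRL.comaximal (hA : IsNormalRL α) (P Q : Set α) (hP : IsMinPrime P)
    (hQ : IsMinPrime Q) (hne : P ≠ Q) : filterGen (P ∪ Q) = univ := by
  by_contra hG
  obtain ⟨R, hR, hPQR⟩ := exists_isPrimeFilter_superset (isFilter_filterGen _) hG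
  have hPQR' := (subset_filterGen _).trans hPQR
  obtain ⟨m, -, hm⟩ := hA R hR
  exact hne ((hm P ⟨hP, subset_union_left.trans hPQR'⟩).trans
    (hm Q ⟨hQ, subset_union_right.trans hPQR'⟩).symm)

/-- Below a prime `R ⊇ x^⊥ ∨ y^⊥` there are minimal primes missing `x` and missing `y`;
the first contains `y` since it contains `x ∨ y = 1`, so they differ, contradicting
normality. -/
theorem IsNormalRL.filterGen_coannulet_eq_univ (hA : IsNormalRL α) (x y : α)
    (hxy : x ⊔ y = ⊤) : filterGen (coannulet x ∪ coannulet y) = univ := by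
  by_contra hG
  obtain ⟨R, hR, hGR⟩ := exists_isPrimeFilter_superset (isFilter_filterGen _) hG
  have hxyR := (subset_filterGen _).trans hGR
  obtain ⟨mx, hmx, hmxR, hxmx⟩ :=
    hR.exists_isMinPrime_subset_notMem (subset_union_left.trans hxyR)
  obtain ⟨my, hmy, hmyR, hymy⟩ :=
    hR.exists_isMinPrime_subset_notMem (subset_union_right.trans hxyR)
  obtain ⟨m, -, hm⟩ := hA R hR
  have hymx : y ∈ mx := hmx.1.mem_of_sup_eq_top hxmx hxy
  exact hymy ((hm my ⟨hmy, hmyR⟩).trans (hm mx ⟨hmx, hmxR⟩).symm ▸ hymx)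

theorem exists_mul_eq_bot_of_filterGen_eq_univ {x y : α}
    (h : filterGen (coannulet x ∪ coannulet y) = univ) :
    ∃ u ∈ coannulet x, ∃ v ∈ coannulet y, u * v = ⊥ := by
  have hbot : ⊥ ∈ filterSup (coannulet x) (coannulet y) := by
    rw [← filterGen_union (isFilter_coannulet x) (isFilter_coannulet y), h]
    exact mem_univ _
  obtain ⟨u, hu, v, hv, huv⟩ := hbot
  exact ⟨u, hu, v, hv, le_bot_iff.mp huv⟩

/-- For `a ∈ (x ∨ y)^⊥`, split `1 = (x ∨ a) ∨ (y ∨ a)` by `u * v = 0`; then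
`(a ∨ u) * (a ∨ v) ≤ a ∨ u * v = a` with `a ∨ u ∈ x^⊥` and `a ∨ v ∈ y^⊥`. -/
theorem coannulet_sup_eq_filterGen
    (h : ∀ x y : α, x ⊔ y = ⊤ → ∃ u ∈ coannulet x, ∃ v ∈ coannulet y, u * v = ⊥)
    (x y : α) : coannulet (x ⊔ y) = filterGen (coannulet x ∪ coannulet y) := by
  refine Subset.antisymm (fun a ha => ?_)
    (filterGen_subset (isFilter_coannulet _)
      (union_subset (coannulet_mono le_sup_left) (coannulet_mono le_sup_right)))
  have ha' : (x ⊔ a) ⊔ (y ⊔ a) = ⊤ := by rwa [sup_sup_sup_comm, sup_idem]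
  obtain ⟨u, hu, v, hv, huv⟩ := h _ _ ha'
  rw [filterGen_union (isFilter_coannulet x) (isFilter_coannulet y)]
  refine ⟨a ⊔ u, ?_, a ⊔ v, ?_, ?_⟩
  · rw [mem_coannulet, ← sup_assoc]
    exact hu
  · rw [mem_coannulet, ← sup_assoc]
    exact hv
  · simpa [huv] using sup_mul_sup_le a u v

theorem isPrimeFilter_unitDivisors
    (h : ∀ x y : α, x ⊔ y = ⊤ → ∃ u ∈ coannulet x, ∃ v ∈ coannulet y, u * v = ⊥)
    (P : Set α) (hP : IsPrimeFilter P) : IsPrimeFilter (unitDivisors P) := by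
  refine ⟨hP.isFilter_unitDivisors, hP.unitDivisors_ne_univ, ?_⟩
  rintro a b ⟨x, hx, hxab⟩
  obtain ⟨u, hu, v, hv, huv⟩ := h (x ⊔ a) b (by rwa [sup_assoc])
  by_cases hvP : v ∈ P
  · have huP : u ∉ P := fun huP => hP.bot_notMem (huv ▸ hP.1.mul_mem huP hvP)
    refine Or.inl ⟨x ⊔ u, fun h => (hP.2.2 x u h).elim hx huP, ?_⟩
    rwa [sup_right_comm]
  · exact Or.inr ⟨v, hvP, by rwa [sup_comm]⟩

theorem isNormalRL_of_isPrimeFilter_unitDivisors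
    (h : ∀ P : Set α, IsPrimeFilter P → IsPrimeFilter (unitDivisors P)) : IsNormalRL α := by
  intro P hP
  have hD := h P hP
  refine ⟨unitDivisors P, ⟨⟨hD, fun Q hQ hQD => ?_⟩, hP.unitDivisors_subset subset_rfl⟩, ?_⟩
  · exact hQD.antisymm (hQ.unitDivisors_subset (hQD.trans (hP.unitDivisors_subset subset_rfl)))
  · rintro m ⟨hm, hmP⟩
    exact (hm.2 _ hD (hm.1.unitDivisors_subset hmP)).symm

/-- Corollary 4.6: the seven characterizations of normality are
equivalent. -/
theorem stmt_18 (α : Type*) [ResiduatedLattice α] :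
    List.TFAE [
      (∀ P Q : Set α, IsMinPrime P → IsMinPrime Q → P ≠ Q →
        filterGen (P ∪ Q) = Set.univ),
      IsNormalRL α,
      (∀ P : Set α, IsPrimeFilter P → IsPrimeFilter (unitDivisors P)),
      (∀ x y : α, x ⊔ y = ⊤ → filterGen (coannulet x ∪ coannulet y) = Set.univ),
      (∀ x y : α, x ⊔ y = ⊤ →
        ∃ u ∈ coannulet x, ∃ v ∈ coannulet y, u * v = (⊥ : α)),
      (∀ x y : α, coannulet (x ⊔ y) = filterGen (coannulet x ∪ coannulet y)),
      (∀ x y : α, coannulet (x ⊔ y) = Set.univ →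
        filterGen (coannulet x ∪ coannulet y) = Set.univ) ] := by
  tfae_have 1 → 2 := isNormalRL_of_comaximal
  tfae_have 2 → 1 := IsNormalRL.comaximal
  tfae_have 2 → 4 := IsNormalRL.filterGen_coannulet_eq_univ
  tfae_have 4 → 5 := fun h x y hxy => exists_mul_eq_bot_of_filterGen_eq_univ (h x y hxy)
  tfae_have 5 → 6 := coannulet_sup_eq_filterGen
  tfae_have 6 → 7 := fun h x y hxy => (h x y).symm.trans hxy
  tfae_have 7 → 4 := fun h x y hxy => h x y (hxy ▸ coannulet_top)
  tfae_have 5 → 3 := isPrimeFilter_unitDivisors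
  tfae_have 3 → 2 := isNormalRL_of_isPrimeFilter_unitDivisors
  tfae_finish
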